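/- arXiv:1807.05257 — 2 statements merged into one kernel-verified Lean document; each statement's English description precedes it below -/
import Mathlib

section
/- For every a in (0,1) and every even nonnegative integer k, the function f_{a,k}(x) = ψ⁽ᵏ⁾(x+a) - ψ⁽ᵏ⁾(x) - a·k!/x^{k+1} satisfies (-1)ⁿ f_{a,k}⁽ⁿ⁾(x) > 0 for all x > 0 and all nonnegative integers n (strict complete monotonicity on (0, ∞)). -/
noncomputable def digamma : ℝ → ℝ := deriv (fun x => Real.log (Real.Gamma x))

noncomputable def polygamma (n : ℕ) : ℝ → ℝ := deriv^[n] digamma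

/-!
Differentiating Gauss's product formula for `Γ` (a uniform limit of derivatives of
`log Γₙ(y)`) gives `ψ(y) = -γ - 1/y + ∑ₘ (1/(m+1) - 1/(y+m+1))` on `(0, ∞)`, and termwise
differentiation then gives
`(-1)^k (ψ⁽ᵏ⁾(y + a) - ψ⁽ᵏ⁾(y)) = k! ∑ₘ ((y+m)^{-(k+1)} - (y+m+a)^{-(k+1)})`.
Since `t ↦ t^{-j}` is strictly convex, the `m`-th term exceeds `a ((y+m)^{-j} - (y+m+1)^{-j})`,
and these bounds telescope to `a y^{-j}`. So `F_k(y) = ψ⁽ᵏ⁾(y+a) - ψ⁽ᵏ⁾(y) - (-1)^k a k!/y^{k+1}`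
satisfies `(-1)^k F_k > 0` for every `k`; moreover `F_k' = F_{k+1}`, and `F_k = f_{a,k}` for even
`k`, so `(-1)^n f_{a,k}^{(n)} = (-1)^{k+n} F_{k+n} > 0`.
-/

open Filter Set Topology
open scoped Nat

lemma summable_inv_add_natCast_pow {c : ℝ} (hc : 0 ≤ c) {j : ℕ} (hj : 2 ≤ j) :
    Summable fun m : ℕ => ((c + m) ^ j)⁻¹ := by
  refine ((Real.summable_one_div_nat_add_rpow c j).2 (by exact_mod_cast hj)).congr fun m => ?_
  rw [abs_of_nonneg (by positivity), Real.rpow_natCast, one_div, add_comm]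

lemma inv_pow_le_inv_pow_left {s t : ℝ} (hs : 0 < s) (hst : s ≤ t) (j : ℕ) :
    (t ^ j)⁻¹ ≤ (s ^ j)⁻¹ :=
  inv_anti₀ (by positivity) (pow_le_pow_left₀ hs.le hst j)

lemma hasSum_sub_succ_of_antitone {f : ℕ → ℝ} {l : ℝ} (hf : Antitone f)
    (hl : Tendsto f atTop (𝓝 l)) : HasSum (fun m => f m - f (m + 1)) (f 0 - l) := by
  rw [hasSum_iff_tendsto_nat_of_nonneg fun m => sub_nonneg.2 (hf m.le_succ)]
  simp_rw [Finset.sum_range_sub']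
  exact tendsto_const_nhds.sub hl

lemma tsum_comp_add_natCast {F : ℝ → ℝ} {y : ℝ} (h : Summable fun m : ℕ => F (y + 1 + m)) :
    ∑' m : ℕ, F (y + m) = F y + ∑' m : ℕ, F (y + 1 + m) := by
  have hshift : ∀ m : ℕ, y + ((m + 1 : ℕ) : ℝ) = y + 1 + m := fun m => by push_cast; ring
  rw [tsum_eq_zero_add' (by simpa only [hshift] using h), Nat.cast_zero, add_zero]
  simp only [hshift]

lemma StrictConvexOn.mul_sub_lt_sub {g : ℝ → ℝ} {s : Set ℝ} (hg : StrictConvexOn ℝ s g)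
    {t a : ℝ} (ht : t ∈ s) (ht' : t + 1 ∈ s) (ha₀ : 0 < a) (ha₁ : a < 1) :
    a * (g t - g (t + 1)) < g t - g (t + a) := by
  have h := hg.2 ht ht' (by linarith : t ≠ t + 1) (by linarith : 0 < 1 - a) ha₀ (by ring)
  simp only [smul_eq_mul, show (1 - a) * t + a * (t + 1) = t + a by ring] at h
  linarith

lemma strictConvexOn_inv_pow {j : ℕ} (hj : j ≠ 0) :
    StrictConvexOn ℝ (Ioi 0) fun t : ℝ => (t ^ j)⁻¹ :=
  (strictConvexOn_zpow (m := -j) (by omega) (by omega)).congr fun t _ => by simp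

lemma hasDerivAt_inv_pow_add (c : ℝ) (j : ℕ) {y : ℝ} (hy : y + c ≠ 0) :
    HasDerivAt (fun z => ((z + c) ^ j)⁻¹) (-j * ((y + c) ^ (j + 1))⁻¹) y := by
  have h := (hasDerivAt_zpow (-j) (y + c) (.inl hy)).comp_add_const y c
  simp only [zpow_neg, zpow_natCast] at h
  refine h.congr_deriv ?_
  rw [show (-(j : ℤ) - 1) = -((j + 1 : ℕ) : ℤ) by push_cast; ring, zpow_neg, zpow_natCast]
  push_cast; ring

lemma hasDerivAt_tsum_of_antitoneOn_norm {g : ℕ → ℝ → ℝ} {g' : ℝ → ℝ} {x : ℝ} (hx : 0 < x)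
    (hg : ∀ m y, 0 < y → HasDerivAt (g m) (g' (y + m)) y)
    (hg' : AntitoneOn (fun t => ‖g' t‖) (Ioi 0))
    (hg's : ∀ y, 0 < y → Summable fun m : ℕ => g' (y + m))
    (hgx : Summable fun m => g m x) :
    HasDerivAt (fun y => ∑' m, g m y) (∑' m : ℕ, g' (x + m)) x := by
  have hx2 : 0 < x / 2 := by positivity
  have hmem : x ∈ Ioi (x / 2) := by simp only [mem_Ioi]; linarith
  refine hasDerivAt_tsum_of_isPreconnected (hg's _ hx2).norm isOpen_Ioi isPreconnected_Ioi
    (fun m y hy => hg m y (hx2.trans hy)) (fun m y hy => ?_) hmem hgx hmem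
  have hy : x / 2 < y := hy
  have hy0 : 0 < y := hx2.trans hy
  exact hg' (show (0:ℝ) < x / 2 + m by positivity) (show (0:ℝ) < y + m by positivity)
    (by linarith)

noncomputable def hurwitzSeries (j : ℕ) (y : ℝ) : ℝ := ∑' m : ℕ, ((y + m) ^ j)⁻¹

lemma hurwitzSeries_eq_inv_pow_add {j : ℕ} (hj : 2 ≤ j) {y : ℝ} (hy : 0 < y) :
    hurwitzSeries j y = (y ^ j)⁻¹ + hurwitzSeries j (y + 1) :=
  tsum_comp_add_natCast (F := fun t => (t ^ j)⁻¹) (summable_inv_add_natCast_pow (by linarith) hj)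

lemma hasDerivAt_hurwitzSeries {j : ℕ} (hj : 2 ≤ j) {x : ℝ} (hx : 0 < x) :
    HasDerivAt (hurwitzSeries j) (-j * hurwitzSeries (j + 1) x) x := by
  rw [hurwitzSeries, ← tsum_mul_left]
  refine hasDerivAt_tsum_of_antitoneOn_norm (g' := fun t => -j * (t ^ (j + 1))⁻¹) hx
    (fun m y hy => hasDerivAt_inv_pow_add _ _ (by positivity)) (fun s hs t _ hst => ?_)
    (fun y hy => (summable_inv_add_natCast_pow hy.le (by omega)).mul_left _)
    (summable_inv_add_natCast_pow hx.le hj)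
  simp only [norm_mul, norm_neg, norm_inv, norm_pow, Real.norm_natCast, Real.norm_of_nonneg hs.le,
    Real.norm_of_nonneg (hs.le.trans hst)]
  exact mul_le_mul_of_nonneg_left (inv_pow_le_inv_pow_left hs hst _) (Nat.cast_nonneg j)

noncomputable def digammaSeries (y : ℝ) : ℝ := ∑' m : ℕ, (((m : ℝ) + 1)⁻¹ - (y + m + 1)⁻¹)

lemma norm_inv_sub_inv_le {b y : ℝ} (hy : 0 < y) (hyb : y ≤ b) (m : ℕ) :
    ‖((m : ℝ) + 1)⁻¹ - (y + m + 1)⁻¹‖ ≤ b * ((1 + (m : ℝ)) ^ 2)⁻¹ := by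
  have hm : (0 : ℝ) < m + 1 := by positivity
  have hym : (0 : ℝ) < y + m + 1 := by positivity
  rw [inv_sub_inv hm.ne' hym.ne', add_sub_add_right_eq_sub, add_sub_cancel_right,
    Real.norm_of_nonneg (by positivity), div_le_iff₀ (by positivity)]
  calc y ≤ b := hyb
    _ ≤ b * ((y + m + 1) / (m + 1)) :=
        le_mul_of_one_le_right (hy.le.trans hyb) ((one_le_div hm).2 (by linarith))
    _ = b * ((1 + (m : ℝ)) ^ 2)⁻¹ * ((m + 1) * (y + m + 1)) := by field_simp; ring

lemma summable_digammaSeries {y : ℝ} (hy : 0 < y) :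
    Summable fun m : ℕ => ((m : ℝ) + 1)⁻¹ - (y + m + 1)⁻¹ :=
  .of_norm_bounded ((summable_inv_add_natCast_pow zero_le_one le_rfl).mul_left y)
    (norm_inv_sub_inv_le hy le_rfl)

lemma hasDerivAt_digammaSeries {x : ℝ} (hx : 0 < x) :
    HasDerivAt digammaSeries (hurwitzSeries 2 (x + 1)) x := by
  refine hasDerivAt_tsum_of_antitoneOn_norm (g' := fun t => ((t + 1) ^ 2)⁻¹) hx
    (fun m y hy => ?_) (fun s hs t _ hst => ?_) (fun y hy => ?_) (summable_digammaSeries hx)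
    |>.congr_deriv ?_
  · simpa [add_assoc] using
      (hasDerivAt_inv_pow_add ((m : ℝ) + 1) 1 (by positivity)).const_sub ((m : ℝ) + 1)⁻¹
  · have hs : (0 : ℝ) < s := hs
    simp only [Real.norm_of_nonneg (inv_nonneg.2 (sq_nonneg _))]
    exact inv_pow_le_inv_pow_left (by positivity) (by linarith) _
  · simpa [add_right_comm] using summable_inv_add_natCast_pow (c := y + 1) (by positivity) le_rfl
  · simp [hurwitzSeries, add_right_comm]

lemma hasDerivAt_logGammaSeq (n : ℕ) {y : ℝ} (hy : 0 < y) :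
    HasDerivAt (fun z => Real.BohrMollerup.logGammaSeq z n)
      (Real.log n - ∑ m ∈ Finset.range (n + 1), (y + m)⁻¹) y := by
  have hlog : ∀ m ∈ Finset.range (n + 1), HasDerivAt (fun z => Real.log (z + m)) (y + m)⁻¹ y :=
    fun m _ => by simpa using ((hasDerivAt_id y).add_const (m : ℝ)).log (by positivity)
  exact ((hasDerivAt_mul_const (Real.log n)).add_const _).fun_sub (HasDerivAt.fun_sum hlog)

lemma log_sub_sum_inv_eq (n : ℕ) (y : ℝ) :
    Real.log n - ∑ m ∈ Finset.range (n + 1), (y + m)⁻¹ =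
      (Real.log n - harmonic n) + ∑ m ∈ Finset.range n, (((m : ℝ) + 1)⁻¹ - (y + m + 1)⁻¹)
        - y⁻¹ := by
  rw [Finset.sum_range_succ', Finset.sum_sub_distrib, harmonic]
  push_cast
  ring_nf

lemma tendstoUniformlyOn_log_sub_sum_inv (b : ℝ) :
    TendstoUniformlyOn
      (fun (n : ℕ) (y : ℝ) => Real.log n - ∑ m ∈ Finset.range (n + 1), (y + m)⁻¹)
      (fun y => -Real.eulerMascheroniConstant + digammaSeries y - y⁻¹) atTop (Ioo 0 b) := by
  have hγ : Tendsto (fun n : ℕ => Real.log n - harmonic n) atTop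
      (𝓝 (-Real.eulerMascheroniConstant)) := by
    simpa using Real.tendsto_harmonic_sub_log.neg
  have hS := tendstoUniformlyOn_tsum_nat
    ((summable_inv_add_natCast_pow zero_le_one le_rfl).mul_left b)
    fun m y (hy : y ∈ Ioo 0 b) => norm_inv_sub_inv_le hy.1 hy.2.le m
  have hinv : TendstoUniformlyOn (fun (_ : ℕ) (y : ℝ) => y⁻¹) (fun y => y⁻¹) atTop (Ioo 0 b) :=
    Metric.tendstoUniformlyOn_iff.2 fun ε hε => .of_forall fun n y _ => by simpa using hε
  refine (((hγ.tendstoUniformlyOn_const _).add hS).sub hinv).congr ?_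
  filter_upwards with n y hy
  exact (log_sub_sum_inv_eq n y).symm

lemma digamma_eq {x : ℝ} (hx : 0 < x) :
    digamma x = -Real.eulerMascheroniConstant + digammaSeries x - x⁻¹ :=
  (hasDerivAt_of_tendstoUniformlyOn isOpen_Ioo (tendstoUniformlyOn_log_sub_sum_inv (x + 1))
    (Eventually.of_forall fun n y hy => hasDerivAt_logGammaSeq n hy.1)
    (fun y hy => Real.BohrMollerup.tendsto_log_gamma hy.1) ⟨hx, by linarith⟩).deriv

lemma hasDerivAt_digamma {x : ℝ} (hx : 0 < x) : HasDerivAt digamma (hurwitzSeries 2 x) x := by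
  have heq : digamma =ᶠ[𝓝 x] fun y => -Real.eulerMascheroniConstant + digammaSeries y - y⁻¹ :=
    eventuallyEq_of_mem (Ioi_mem_nhds hx) fun y hy => digamma_eq hy
  refine ((((hasDerivAt_digammaSeries hx).const_add _).sub (hasDerivAt_inv hx.ne'))
    |>.congr_of_eventuallyEq heq).congr_deriv ?_
  rw [hurwitzSeries_eq_inv_pow_add le_rfl hx]
  ring

lemma polygamma_zero : polygamma 0 = digamma := rfl

lemma polygamma_succ (k : ℕ) : polygamma (k + 1) = deriv (polygamma k) :=
  Function.iterate_succ_apply' deriv k digamma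

lemma polygamma_succ_eqOn (k : ℕ) :
    EqOn (polygamma (k + 1)) (fun y => (-1) ^ k * (k + 1)! * hurwitzSeries (k + 2) y)
      (Ioi 0) := by
  induction k with
  | zero =>
    intro y hy
    simpa [polygamma_succ, polygamma_zero] using (hasDerivAt_digamma hy).deriv
  | succ k ih =>
    intro y (hy : 0 < y)
    rw [polygamma_succ, (ih.eventuallyEq_of_mem (Ioi_mem_nhds hy)).deriv_eq,
      deriv_const_mul_field, (hasDerivAt_hurwitzSeries (by omega) hy).deriv,
      Nat.factorial_succ (k + 1)]
    push_cast
    ring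

lemma hasDerivAt_polygamma (k : ℕ) {x : ℝ} (hx : 0 < x) :
    HasDerivAt (polygamma k) (polygamma (k + 1) x) x := by
  rw [polygamma_succ]
  refine DifferentiableAt.hasDerivAt ?_
  cases k with
  | zero => exact (hasDerivAt_digamma hx).differentiableAt
  | succ k =>
    exact ((polygamma_succ_eqOn k).eventuallyEq_of_mem (Ioi_mem_nhds hx)).differentiableAt_iff.2
      (((hasDerivAt_hurwitzSeries (by omega) hx).const_mul _).differentiableAt)

noncomputable def hurwitzDiffSeries (a : ℝ) (j : ℕ) (y : ℝ) : ℝ :=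
  ∑' m : ℕ, (((y + m) ^ j)⁻¹ - ((y + m + a) ^ j)⁻¹)

lemma hurwitzDiffSeries_eq_sub {a : ℝ} (ha : 0 ≤ a) {j : ℕ} (hj : 2 ≤ j) {y : ℝ} (hy : 0 < y) :
    hurwitzDiffSeries a j y = hurwitzSeries j y - hurwitzSeries j (y + a) := by
  rw [hurwitzSeries, hurwitzSeries, ← (summable_inv_add_natCast_pow hy.le hj).tsum_sub
    (summable_inv_add_natCast_pow (by positivity) hj)]
  exact tsum_congr fun m => by rw [add_right_comm]

lemma digamma_add_sub_digamma {a : ℝ} (ha : 0 ≤ a) {y : ℝ} (hy : 0 < y) :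
    digamma (y + a) - digamma y = hurwitzDiffSeries a 1 y := by
  have hya : 0 < y + a := by positivity
  have hterm : ∀ m : ℕ,
      (((m : ℝ) + 1)⁻¹ - (y + a + m + 1)⁻¹) - (((m : ℝ) + 1)⁻¹ - (y + m + 1)⁻¹)
        = (y + 1 + m)⁻¹ - (y + 1 + m + a)⁻¹ := fun m => by ring_nf
  have hW : digammaSeries (y + a) - digammaSeries y
      = ∑' m : ℕ, ((y + 1 + m)⁻¹ - (y + 1 + m + a)⁻¹) := by
    rw [digammaSeries, digammaSeries, ← (summable_digammaSeries hya).tsum_sub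
      (summable_digammaSeries hy)]
    exact tsum_congr hterm
  have hs : Summable fun m : ℕ => (y + 1 + m)⁻¹ - (y + 1 + m + a)⁻¹ := by
    simpa only [hterm] using (summable_digammaSeries hya).sub (summable_digammaSeries hy)
  rw [digamma_eq hya, digamma_eq hy, hurwitzDiffSeries,
    tsum_comp_add_natCast (F := fun t => (t ^ 1)⁻¹ - ((t + a) ^ 1)⁻¹) (by simpa using hs)]
  simp only [pow_one]
  rw [← hW]
  ring

lemma polygamma_add_sub_polygamma {a : ℝ} (ha : 0 ≤ a) (k : ℕ) {y : ℝ} (hy : 0 < y) :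
    polygamma k (y + a) - polygamma k y = (-1) ^ k * k ! * hurwitzDiffSeries a (k + 1) y := by
  cases k with
  | zero => simpa [polygamma_zero] using digamma_add_sub_digamma ha hy
  | succ k =>
    rw [polygamma_succ_eqOn k (show 0 < y + a by positivity), polygamma_succ_eqOn k hy,
      hurwitzDiffSeries_eq_sub ha (by omega) hy]
    ring

lemma mul_inv_pow_lt_hurwitzDiffSeries {a : ℝ} (ha₀ : 0 < a) (ha₁ : a < 1) {j : ℕ} (hj : j ≠ 0)
    {y : ℝ} (hy : 0 < y) : a * (y ^ j)⁻¹ < hurwitzDiffSeries a j y := by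
  set u : ℕ → ℝ := fun m => ((y + m) ^ j)⁻¹ with hu
  have hu_anti : Antitone u := fun m n hmn =>
    inv_pow_le_inv_pow_left (by positivity) (by simpa using hmn) j
  have hu_lim : Tendsto u atTop (𝓝 0) :=
    tendsto_inv_atTop_zero.comp ((tendsto_pow_atTop hj).comp
      (tendsto_atTop_add_const_left _ y tendsto_natCast_atTop_atTop))
  have htel : HasSum (fun m => u m - u (m + 1)) (y ^ j)⁻¹ := by
    simpa [hu] using hasSum_sub_succ_of_antitone hu_anti hu_lim
  have hsucc : ∀ m : ℕ, u (m + 1) = ((y + m + 1) ^ j)⁻¹ := fun m => by simp [hu, add_assoc]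
  have hnonneg : ∀ m : ℕ, 0 ≤ a * (u m - u (m + 1)) :=
    fun m => mul_nonneg ha₀.le (sub_nonneg.2 (hu_anti m.le_succ))
  have hlt : ∀ m : ℕ, a * (u m - u (m + 1)) < ((y + m) ^ j)⁻¹ - ((y + m + a) ^ j)⁻¹ := by
    intro m
    rw [hsucc]
    exact (strictConvexOn_inv_pow hj).mul_sub_lt_sub (show 0 < y + m by positivity)
      (show 0 < y + m + 1 by positivity) ha₀ ha₁
  have hle : ∀ m : ℕ, ((y + m) ^ j)⁻¹ - ((y + m + a) ^ j)⁻¹ ≤ u m - u (m + 1) := fun m => by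
    rw [hsucc]
    have := inv_pow_le_inv_pow_left (show 0 < y + m + a by positivity)
      (show y + m + a ≤ y + m + 1 by linarith) j
    linarith
  rw [← (htel.mul_left a).tsum_eq]
  exact Summable.tsum_lt_tsum_of_nonneg hnonneg (fun m => (hlt m).le) (hlt 0)
    (htel.summable.of_nonneg_of_le (fun m => (hnonneg m).trans (hlt m).le) hle)

-- The `F_k` of the header.
noncomputable def polygammaDefect (a : ℝ) (k : ℕ) (y : ℝ) : ℝ :=
  polygamma k (y + a) - polygamma k y - (-1) ^ k * a * k ! / y ^ (k + 1)

lemma hasDerivAt_polygammaDefect {a : ℝ} (ha : 0 ≤ a) (k : ℕ) {x : ℝ} (hx : 0 < x) :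
    HasDerivAt (polygammaDefect a k) (polygammaDefect a (k + 1) x) x := by
  have hshift := (hasDerivAt_polygamma k (show 0 < x + a by positivity)).comp_add_const x a
  have hpow := (hasDerivAt_inv_pow_add 0 (k + 1) (by simpa using hx.ne')).const_mul
    ((-1) ^ k * a * k !)
  simp only [add_zero] at hpow
  refine ((hshift.sub (hasDerivAt_polygamma k hx)).sub hpow).congr_deriv ?_
    |>.congr_of_eventuallyEq ?_
  · simp only [polygammaDefect, Nat.factorial_succ]; push_cast; ring
  · exact .of_forall fun y => by simp [polygammaDefect, div_eq_mul_inv]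

lemma iterate_deriv_polygammaDefect {a : ℝ} (ha : 0 ≤ a) (k n : ℕ) {x : ℝ} (hx : 0 < x) :
    deriv^[n] (polygammaDefect a k) x = polygammaDefect a (k + n) x := by
  induction n generalizing x with
  | zero => rfl
  | succ n ih =>
    rw [Function.iterate_succ_apply', ← add_assoc,
      (eventuallyEq_of_mem (Ioi_mem_nhds hx) fun y hy => ih hy).deriv_eq,
      (hasDerivAt_polygammaDefect ha _ hx).deriv]

lemma neg_one_pow_mul_polygammaDefect_pos {a : ℝ} (ha₀ : 0 < a) (ha₁ : a < 1) (k : ℕ) {y : ℝ}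
    (hy : 0 < y) : 0 < (-1) ^ k * polygammaDefect a k y := by
  have hsq : ((-1 : ℝ) ^ k) ^ 2 = 1 := by rw [← pow_mul, pow_mul', neg_one_sq, one_pow]
  have heq : (-1) ^ k * polygammaDefect a k y
      = k ! * (hurwitzDiffSeries a (k + 1) y - a * (y ^ (k + 1))⁻¹) := by
    rw [polygammaDefect, polygamma_add_sub_polygamma ha₀.le k hy]
    linear_combination (k ! * hurwitzDiffSeries a (k + 1) y - a * k ! / y ^ (k + 1)) * hsq
  rw [heq]
  have := mul_inv_pow_lt_hurwitzDiffSeries ha₀ ha₁ k.succ_ne_zero hy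
  have := Nat.factorial_pos k
  positivity

theorem stmt_9 (a : ℝ) (ha : a ∈ Set.Ioo (0:ℝ) 1) (k : ℕ) (hk : Even k)
    (n : ℕ) (x : ℝ) (hx : 0 < x) :
    0 < (-1) ^ n *
      deriv^[n] (fun y : ℝ =>
        polygamma k (y + a) - polygamma k y - a * (Nat.factorial k : ℝ) / y ^ (k + 1)) x := by
  have hf : (fun y : ℝ => polygamma k (y + a) - polygamma k y - a * (k ! : ℝ) / y ^ (k + 1))
      = polygammaDefect a k := by
    funext y
    rw [polygammaDefect, hk.neg_one_pow, one_mul]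
  rw [hf, iterate_deriv_polygammaDefect ha.1.le k n hx]
  simpa [pow_add, hk.neg_one_pow] using neg_one_pow_mul_polygammaDefect_pos ha.1 ha.2 (k + n) hx
end

section
/- For every x > 1, one has 1/(2x) < ψ(x + 1/2) - ψ(x) < 1/(2x) + 3/2 - 2·log 2. -/
/-!
Let `E x = ψ(x + 1/2) - ψ(x) - 1/(2x)` (`halfShiftExcess`). The recurrence `ψ(x + 1) = ψ(x) + 1/x`
gives `E x - E (x + 1) = 1 / (4 x (x + 1/2) (x + 1))`, and the monotonicity of `ψ` (convexity of
`log Γ`) squeezes `E (x + n)` to `0`. Hence `E x` is the sum of the positive terms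
`1 / (4 u (u + 1/2) (u + 1))`, `u = x + n`, each strictly decreasing in `x`: so `0 < E x < E 1`,
and `E 1 = 3/2 - 2 log 2` by the values `ψ(1) = -γ`, `ψ(1/2) = -γ - 2 log 2`.
-/

open Real Set Filter Topology Finset

lemma differentiableAt_log_Gamma {x : ℝ} (hx : 0 < x) :
    DifferentiableAt ℝ (fun x => log (Gamma x)) x :=
  (differentiableAt_Gamma fun m =>
    ((neg_nonpos.mpr m.cast_nonneg).trans_lt hx).ne').log (Gamma_pos_of_pos hx).ne'

lemma digamma_add_one {x : ℝ} (hx : 0 < x) : digamma (x + 1) = digamma x + 1 / x := by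
  unfold digamma
  rw [← deriv_comp_add_const, one_div, ← deriv_log,
    ← deriv_add (differentiableAt_log_Gamma hx) (differentiableAt_log hx.ne')]
  apply EventuallyEq.deriv_eq
  filter_upwards [eventually_gt_nhds hx] with y hy
  rw [Gamma_add_one hy.ne', log_mul hy.ne' (Gamma_pos_of_pos hy).ne', add_comm]
  rfl

lemma digamma_one : digamma 1 = -eulerMascheroniConstant := by
  rw [digamma, (hasDerivAt_Gamma_one.log (by simp)).deriv, Gamma_one, div_one]

lemma digamma_one_half : digamma (1 / 2) = -(eulerMascheroniConstant + 2 * log 2) := by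
  have hsqrt : 0 < √π := sqrt_pos.mpr pi_pos
  rw [digamma, (hasDerivAt_Gamma_one_half.log (by rw [Gamma_one_half_eq]; exact hsqrt.ne')).deriv,
    Gamma_one_half_eq]
  field_simp

lemma digamma_monotoneOn : MonotoneOn digamma (Ioi 0) :=
  convexOn_log_Gamma.monotoneOn_deriv fun _ hy => differentiableAt_log_Gamma hy

noncomputable def halfShiftExcess (x : ℝ) : ℝ := digamma (x + 1 / 2) - digamma x - 1 / (2 * x)

lemma halfShiftExcess_sub_add_one {x : ℝ} (hx : 0 < x) :
    halfShiftExcess x - halfShiftExcess (x + 1) = 1 / (4 * x * (x + 1 / 2) * (x + 1)) := by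
  have hshift : x + 1 + 1 / 2 = x + 1 / 2 + 1 := by ring
  simp only [halfShiftExcess, hshift, digamma_add_one hx,
    digamma_add_one (by linarith : 0 < x + 1 / 2)]
  field_simp
  ring

lemma abs_halfShiftExcess_le {x : ℝ} (hx : 0 < x) : |halfShiftExcess x| ≤ 1 / (2 * x) := by
  have hlow : digamma x ≤ digamma (x + 1 / 2) :=
    digamma_monotoneOn hx (mem_Ioi.mpr (by linarith)) (by linarith)
  have hup : digamma (x + 1 / 2) ≤ digamma (x + 1) :=
    digamma_monotoneOn (mem_Ioi.mpr (by linarith)) (mem_Ioi.mpr (by linarith)) (by linarith)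
  have hrec := digamma_add_one hx
  have hinv : 1 / x = 2 * (1 / (2 * x)) := by field_simp
  rw [abs_le, halfShiftExcess]
  constructor <;> linarith

lemma tendsto_halfShiftExcess_add_nat {x : ℝ} (hx : 0 < x) :
    Tendsto (fun n : ℕ => halfShiftExcess (x + n)) atTop (𝓝 0) := by
  have hbound : Tendsto (fun n : ℕ => 1 / (2 * (x + n))) atTop (𝓝 0) :=
    tendsto_const_nhds.div_atTop <| tendsto_id.const_mul_atTop' two_pos |>.comp <|
      tendsto_atTop_add_const_left atTop x tendsto_natCast_atTop_atTop
  exact squeeze_zero_norm (fun n => abs_halfShiftExcess_le (by positivity)) hbound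

lemma hasSum_sub_succ_of_antitone_s13 {a : ℕ → ℝ} (ha : Antitone a) (hlim : Tendsto a atTop (𝓝 0)) :
    HasSum (fun n => a n - a (n + 1)) (a 0) := by
  rw [hasSum_iff_tendsto_nat_of_nonneg fun n => sub_nonneg.mpr (ha n.le_succ)]
  simpa only [sum_range_sub', sub_zero] using tendsto_const_nhds.sub hlim

lemma hasSum_halfShiftExcess {x : ℝ} (hx : 0 < x) :
    HasSum (fun n : ℕ => 1 / (4 * (x + n) * (x + n + 1 / 2) * (x + n + 1))) (halfShiftExcess x) := by
  have hstep (n : ℕ) : halfShiftExcess (x + n) - halfShiftExcess (x + (n + 1 : ℕ)) =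
      1 / (4 * (x + n) * (x + n + 1 / 2) * (x + n + 1)) := by
    rw [Nat.cast_succ, ← add_assoc, halfShiftExcess_sub_add_one (by positivity)]
  have hanti : Antitone fun n : ℕ => halfShiftExcess (x + n) := antitone_nat_of_succ_le fun n => by
    have := hstep n
    have : 0 < 1 / (4 * (x + n) * (x + n + 1 / 2) * (x + n + 1)) := by positivity
    linarith
  simpa only [hstep, Nat.cast_zero, add_zero] using
    hasSum_sub_succ_of_antitone_s13 hanti (tendsto_halfShiftExcess_add_nat hx)

lemma halfShiftExcess_one : halfShiftExcess 1 = 3 / 2 - 2 * log 2 := by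
  have hrec := digamma_add_one (x := 1 / 2) (by norm_num)
  rw [show (1 / 2 : ℝ) + 1 = 1 + 1 / 2 by norm_num, digamma_one_half] at hrec
  rw [halfShiftExcess, hrec, digamma_one]
  ring

theorem stmt_13 (x : ℝ) (hx : 1 < x) :
    1 / (2 * x) < digamma (x + 1/2) - digamma x ∧
    digamma (x + 1/2) - digamma x < 1 / (2 * x) + 3/2 - 2 * Real.log 2 := by
  have hx0 : 0 < x := by linarith
  have hsum := hasSum_halfShiftExcess hx0
  have hterm_pos (n : ℕ) : 0 < 1 / (4 * (x + n) * (x + n + 1 / 2) * (x + n + 1)) := by positivity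
  have hterm_lt (n : ℕ) : 1 / (4 * (x + n) * (x + n + 1 / 2) * (x + n + 1)) <
      1 / (4 * (1 + n) * (1 + n + 1 / 2) * (1 + n + 1)) := by
    apply one_div_lt_one_div_of_lt (by positivity)
    gcongr
  have hpos : 0 < halfShiftExcess x :=
    hasSum_lt (fun n => (hterm_pos n).le) (hterm_pos 0) hasSum_zero hsum
  have hlt : halfShiftExcess x < halfShiftExcess 1 :=
    hasSum_lt (fun n => (hterm_lt n).le) (hterm_lt 0) hsum (hasSum_halfShiftExcess one_pos)
  rw [halfShiftExcess_one] at hlt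
  unfold halfShiftExcess at hpos hlt
  constructor <;> linarith
end
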